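/- arXiv:1204.1484 — 6 statements merged into one kernel-verified Lean document; each statement's English description precedes it below -/
import Mathlib

section
/- If ρ : (a,b) → ℝ is positive and satisfies the ODE 3ρρ'' = 1 + (ρ')², then there exists a positive constant C such that (ρ')² = Cρ^(2/3) − 1 on (a,b). -/
/-!
The ODE makes `(1 + ρ'²) / ρ^(2/3)` a first integral: its derivative is
`ρ' (3ρρ'' - (1 + ρ'²)) · (2/3) / ρ^(5/3) = 0`. Hence it equals a constant `C` on the interval,
and `C > 0` because both numerator and denominator are positive.
-/

open Real Set

theorem hasDerivAt_one_add_sq_div_rpow_of_ode {f f' : ℝ → ℝ} {f'' u : ℝ}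
    (hf : HasDerivAt f (f' u) u) (hf' : HasDerivAt f' f'' u) (hpos : 0 < f u)
    (hode : 3 * f u * f'' = 1 + f' u ^ 2) :
    HasDerivAt (fun x => (1 + f' x ^ 2) / f x ^ (2 / 3 : ℝ)) 0 u := by
  have hnum : HasDerivAt (fun x => 1 + f' x ^ 2) (2 * f' u * f'') u := by
    simpa using (hf'.pow 2).const_add 1
  have hden : HasDerivAt (fun x => f x ^ (2 / 3 : ℝ)) (f' u * (2 / 3) * f u ^ (2 / 3 - 1 : ℝ)) u :=
    hf.rpow_const (Or.inl hpos.ne')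
  have hden_pos : 0 < f u ^ (2 / 3 : ℝ) := rpow_pos_of_pos hpos _
  have hrpow_sub : f u ^ (2 / 3 - 1 : ℝ) = f u ^ (2 / 3 : ℝ) / f u := by
    rw [rpow_sub hpos, rpow_one]
  refine (hnum.div hden hden_pos.ne').congr_deriv ?_
  rw [hrpow_sub, div_eq_zero_iff]
  left
  field_simp
  linear_combination (2 * f' u * f u ^ (2 / 3 : ℝ)) * hode

/-- If ρ : (a,b) → ℝ is positive and satisfies the ODE 3ρρ'' = 1 + (ρ')²,
then there exists a positive constant C such that (ρ')² = Cρ^(2/3) − 1 on (a,b). -/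
theorem stmt_0 (a b : ℝ) (ρ : ℝ → ℝ)
    (hpos : ∀ u ∈ Set.Ioo a b, 0 < ρ u)
    (hdiff : ∀ u ∈ Set.Ioo a b, DifferentiableAt ℝ ρ u ∧ DifferentiableAt ℝ (deriv ρ) u)
    (hode : ∀ u ∈ Set.Ioo a b, 3 * ρ u * deriv (deriv ρ) u = 1 + (deriv ρ u) ^ 2) :
    ∃ C : ℝ, 0 < C ∧ ∀ u ∈ Set.Ioo a b,
      (deriv ρ u) ^ 2 = C * (ρ u) ^ ((2 : ℝ) / 3) - 1 := by
  have hI : ∀ u ∈ Ioo a b,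
      HasDerivAt (fun x => (1 + deriv ρ x ^ 2) / ρ x ^ (2 / 3 : ℝ)) 0 u := fun u hu =>
    hasDerivAt_one_add_sq_div_rpow_of_ode (hdiff u hu).1.hasDerivAt (hdiff u hu).2.hasDerivAt
      (hpos u hu) (hode u hu)
  obtain ⟨C, hC⟩ := isOpen_Ioo.exists_is_const_of_deriv_eq_zero isPreconnected_Ioo
    (fun u hu => (hI u hu).differentiableAt.differentiableWithinAt) (fun u hu => (hI u hu).deriv)
  rcases (Ioo a b).eq_empty_or_nonempty with hempty | ⟨u₀, hu₀⟩
  · exact ⟨1, one_pos, by simp [hempty]⟩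
  refine ⟨C, hC u₀ hu₀ ▸ div_pos (by positivity) (rpow_pos_of_pos (hpos u₀ hu₀) _), fun u hu => ?_⟩
  have hCu := hC u hu
  rw [div_eq_iff (rpow_pos_of_pos (hpos u hu) _).ne'] at hCu
  linarith
end

section
/- If k : (a,b) → ℝ is a positive twice differentiable function satisfying k''k = (7/4)(k')² + (4/3)k² − 4k⁴, then there exists a real constant C such that (k')² = −(16/9)k² − 16k⁴ + C·k^(7/2) on (a,b), i.e. the quantity ((k')² + (16/9)k² + 16k⁴)·k^(−7/2) is constant. -/
/-!
For `k > 0` the equation `k k'' = α k'² + (α - 1) c₂ k² + (α - 2) c₄ k⁴` says exactly that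
`(k'² + c₂ k² + c₄ k⁴) k^(-2α)` has derivative `0`, so on an interval it is a constant `C`, which
gives `k'² = -c₂ k² - c₄ k⁴ + C k^(2α)`. The theorem is the case
`α = 7/4`, `c₂ = 16/9`, `c₄ = 16`.
-/

open Set

noncomputable def firstIntegral (α c₂ c₄ : ℝ) (k : ℝ → ℝ) (x : ℝ) : ℝ :=
  (deriv k x ^ 2 + c₂ * k x ^ 2 + c₄ * k x ^ 4) * k x ^ (-2 * α)

theorem hasDerivAt_firstIntegral {α c₂ c₄ u : ℝ} {k : ℝ → ℝ} (hk : 0 < k u)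
    (hk₁ : DifferentiableAt ℝ k u) (hk₂ : DifferentiableAt ℝ (deriv k) u) :
    HasDerivAt (firstIntegral α c₂ c₄ k)
      (2 * deriv k u * k u ^ (-2 * α - 1) * (deriv (deriv k) u * k u - α * deriv k u ^ 2
        - (α - 1) * c₂ * k u ^ 2 - (α - 2) * c₄ * k u ^ 4)) u := by
  have hpoly := ((hk₂.hasDerivAt.pow 2).add ((hk₁.hasDerivAt.pow 2).const_mul c₂)).add
    ((hk₁.hasDerivAt.pow 4).const_mul c₄)
  have hpow := hk₁.hasDerivAt.rpow_const (p := -2 * α) (Or.inl hk.ne')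
  refine (hpoly.mul hpow).congr_deriv ?_
  rw [show k u ^ (-2 * α) = k u ^ (-2 * α - 1) * k u by
    rw [← Real.rpow_add_one hk.ne']; ring_nf]
  simp only [Pi.add_apply, Pi.pow_apply]
  push_cast
  ring

theorem hasDerivAt_firstIntegral_eq_zero {α c₂ c₄ u : ℝ} {k : ℝ → ℝ} (hk : 0 < k u)
    (hk₁ : DifferentiableAt ℝ k u) (hk₂ : DifferentiableAt ℝ (deriv k) u)
    (hode : deriv (deriv k) u * k u =
      α * deriv k u ^ 2 + (α - 1) * c₂ * k u ^ 2 + (α - 2) * c₄ * k u ^ 4) :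
    HasDerivAt (firstIntegral α c₂ c₄ k) 0 u := by
  convert hasDerivAt_firstIntegral (c₂ := c₂) (c₄ := c₄) hk hk₁ hk₂ using 1
  rw [hode]
  ring

theorem exists_firstIntegral_eq_const {α c₂ c₄ a b : ℝ} {k : ℝ → ℝ}
    (hpos : ∀ u ∈ Ioo a b, 0 < k u)
    (hdiff : ∀ u ∈ Ioo a b, DifferentiableAt ℝ k u ∧ DifferentiableAt ℝ (deriv k) u)
    (hode : ∀ u ∈ Ioo a b, deriv (deriv k) u * k u =
      α * deriv k u ^ 2 + (α - 1) * c₂ * k u ^ 2 + (α - 2) * c₄ * k u ^ 4) :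
    ∃ C, ∀ u ∈ Ioo a b, firstIntegral α c₂ c₄ k u = C := by
  have hderiv : ∀ u ∈ Ioo a b, HasDerivAt (firstIntegral α c₂ c₄ k) 0 u := fun u hu =>
    hasDerivAt_firstIntegral_eq_zero (hpos u hu) (hdiff u hu).1 (hdiff u hu).2 (hode u hu)
  exact isOpen_Ioo.exists_is_const_of_deriv_eq_zero isPreconnected_Ioo
    (fun u hu => (hderiv u hu).differentiableAt.differentiableWithinAt)
    (fun u hu => (hderiv u hu).deriv)

theorem sq_deriv_eq_of_firstIntegral_eq {α c₂ c₄ C u : ℝ} {k : ℝ → ℝ} (hk : 0 < k u)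
    (h : firstIntegral α c₂ c₄ k u = C) :
    deriv k u ^ 2 = -c₂ * k u ^ 2 - c₄ * k u ^ 4 + C * k u ^ (2 * α) := by
  have hinv : k u ^ (-2 * α) * k u ^ (2 * α) = 1 := by
    rw [← Real.rpow_add hk]; simp
  rw [← h, firstIntegral, mul_assoc, hinv]
  ring

/-- If k > 0 satisfies k''k = (7/4)(k')² + (4/3)k² − 4k⁴, then for some constant C,
(k')² = −(16/9)k² − 16k⁴ + C·k^(7/2) on (a,b). -/
theorem stmt_4 (a b : ℝ) (k : ℝ → ℝ)
    (hpos : ∀ u ∈ Set.Ioo a b, 0 < k u)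
    (hdiff : ∀ u ∈ Set.Ioo a b, DifferentiableAt ℝ k u ∧ DifferentiableAt ℝ (deriv k) u)
    (hode : ∀ u ∈ Set.Ioo a b, deriv (deriv k) u * k u =
      (7 / 4) * (deriv k u) ^ 2 + (4 / 3) * (k u) ^ 2 - 4 * (k u) ^ 4) :
    ∃ C : ℝ, ∀ u ∈ Set.Ioo a b,
      (deriv k u) ^ 2 = -(16 / 9) * (k u) ^ 2 - 16 * (k u) ^ 4 + C * (k u) ^ ((7 : ℝ) / 2) := by
  obtain ⟨C, hC⟩ := exists_firstIntegral_eq_const (α := 7 / 4) (c₂ := 16 / 9) (c₄ := 16)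
    hpos hdiff fun u hu => by rw [hode u hu]; ring
  refine ⟨C, fun u hu => ?_⟩
  convert sq_deriv_eq_of_firstIntegral_eq (hpos u hu) (hC u hu) using 3
  norm_num
end

section
/- If k : (a,b) → ℝ is a positive twice differentiable function satisfying k''k = (7/4)(k')² − (4/3)k² − 4k⁴, then the quantity ((k')² − (16/9)k² + 16k⁴)·k^(−7/2) is constant on (a,b). -/
/-!
Multiplying the ODE by `2 k' k^(-9/2)` turns it into an exact derivative: for
`E = (k'² - A k² + B k⁴) k^p` one has
`E' = k' k^(p-1) (2 k'' k + p k'² - A (2+p) k² + B (4+p) k⁴)`,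
and with `p = -7/2`, `A = 16/9`, `B = 16` the bracket is twice the ODE, so `E' = 0` on the interval.
-/

noncomputable def odeEnergy (A B p : ℝ) (k : ℝ → ℝ) (u : ℝ) : ℝ :=
  (deriv k u ^ 2 - A * k u ^ 2 + B * k u ^ 4) * k u ^ p

theorem hasDerivAt_odeEnergy (A B p : ℝ) {k : ℝ → ℝ} {u : ℝ} (hk : k u ≠ 0)
    (hk₁ : DifferentiableAt ℝ k u) (hk₂ : DifferentiableAt ℝ (deriv k) u) :
    HasDerivAt (odeEnergy A B p k)
      (deriv k u * k u ^ (p - 1) * (2 * deriv (deriv k) u * k u + p * deriv k u ^ 2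
        - A * (2 + p) * k u ^ 2 + B * (4 + p) * k u ^ 4)) u := by
  have hpoly := ((hk₂.hasDerivAt.pow 2).sub ((hk₁.hasDerivAt.pow 2).const_mul A)).add
    ((hk₁.hasDerivAt.pow 4).const_mul B)
  have hrpow := (Real.hasDerivAt_rpow_const (p := p) (Or.inl hk)).comp u hk₁.hasDerivAt
  refine (hpoly.mul hrpow).congr_deriv ?_
  have hsplit : k u ^ p = k u ^ (p - 1) * k u := by
    rw [← Real.rpow_add_one hk, sub_add_cancel]
  simp only [Pi.add_apply, Pi.sub_apply, Pi.pow_apply, Function.comp_apply, Nat.cast_ofNat, hsplit]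
  ring

theorem hasDerivAt_odeEnergy_eq_zero {k : ℝ → ℝ} {u : ℝ} (hk : k u ≠ 0)
    (hk₁ : DifferentiableAt ℝ k u) (hk₂ : DifferentiableAt ℝ (deriv k) u)
    (hode : deriv (deriv k) u * k u =
      (7 / 4) * (deriv k u) ^ 2 - (4 / 3) * (k u) ^ 2 - 4 * (k u) ^ 4) :
    HasDerivAt (odeEnergy (16 / 9) 16 (-(7 : ℝ) / 2) k) 0 u := by
  refine (hasDerivAt_odeEnergy _ _ _ hk hk₁ hk₂).congr_deriv ?_
  linear_combination (2 * deriv k u * k u ^ (-(7 : ℝ) / 2 - 1)) * hode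

/-- If k > 0 satisfies k''k = (7/4)(k')² − (4/3)k² − 4k⁴, then
((k')² − (16/9)k² + 16k⁴)·k^(−7/2) is constant on (a,b). -/
theorem stmt_5 (a b : ℝ) (k : ℝ → ℝ)
    (hpos : ∀ u ∈ Set.Ioo a b, 0 < k u)
    (hdiff : ∀ u ∈ Set.Ioo a b, DifferentiableAt ℝ k u ∧ DifferentiableAt ℝ (deriv k) u)
    (hode : ∀ u ∈ Set.Ioo a b, deriv (deriv k) u * k u =
      (7 / 4) * (deriv k u) ^ 2 - (4 / 3) * (k u) ^ 2 - 4 * (k u) ^ 4) :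
    ∃ C : ℝ, ∀ u ∈ Set.Ioo a b,
      ((deriv k u) ^ 2 - (16 / 9) * (k u) ^ 2 + 16 * (k u) ^ 4) * (k u) ^ (-(7 : ℝ) / 2) = C := by
  have hE : ∀ u ∈ Set.Ioo a b, HasDerivAt (odeEnergy (16 / 9) 16 (-(7 : ℝ) / 2) k) 0 u :=
    fun u hu =>
      hasDerivAt_odeEnergy_eq_zero (hpos u hu).ne' (hdiff u hu).1 (hdiff u hu).2 (hode u hu)
  exact isOpen_Ioo.exists_is_const_of_deriv_eq_zero isPreconnected_Ioo
    (fun u hu => (hE u hu).differentiableAt.differentiableWithinAt)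
    (fun u hu => (hE u hu).deriv)
end

section
/- Let f : (a,b) → ℝ be positive and twice differentiable satisfying f·f'' = (7/4)(f')² − f⁴, and define κ₂ := √(9(f')²/(16f²) + 9f²/4). Then (f/κ₂)' − (1/4)(f'/κ₂) = 0. -/
/-!
Along a solution of `f f'' = (7/4) f'² - f⁴`, the logarithmic derivative of `κ₂²` is
`(3/2) f'/f`, so `κ₂² = C f^{3/2}` and `f / κ₂ = f^{1/4} / √C`, whose derivative is
`(1/4) f' / κ₂`.
-/

open Real

/-- `κ₂²`, with `d` standing for `f'`. -/
noncomputable def kappaSq (f d : ℝ → ℝ) (x : ℝ) : ℝ :=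
  9 * d x ^ 2 / (16 * f x ^ 2) + 9 * f x ^ 2 / 4

theorem hasDerivAt_kappaSq {f d : ℝ → ℝ} {d' u : ℝ} (hf : HasDerivAt f (d u) u)
    (hd : HasDerivAt d d' u) (hfu : f u ≠ 0)
    (hode : f u * d' = 7 / 4 * d u ^ 2 - f u ^ 4) :
    HasDerivAt (kappaSq f d) (3 * d u * kappaSq f d u / (2 * f u)) u := by
  have h16 : 16 * f u ^ 2 ≠ 0 := by positivity
  have hd' : d' = (7 / 4 * d u ^ 2 - f u ^ 4) / f u := by
    rw [← hode, mul_div_cancel_left₀ _ hfu]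
  refine ((((hd.pow 2).const_mul 9).div ((hf.pow 2).const_mul 16) h16).add
    (((hf.pow 2).const_mul 9).div_const 4)).congr_deriv ?_
  simp only [kappaSq, hd', Pi.pow_apply]
  field_simp
  ring

theorem HasDerivAt.div_sqrt_of_logDeriv {f g : ℝ → ℝ} {f' u : ℝ} (hf : HasDerivAt f f' u)
    (hg : HasDerivAt g (3 * f' * g u / (2 * f u)) u) (hfu : f u ≠ 0) (hgu : 0 < g u) :
    HasDerivAt (fun x => f x / √(g x)) (1 / 4 * (f' / √(g u))) u := by
  have hs : √(g u) ≠ 0 := (sqrt_pos.2 hgu).ne'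
  refine (hf.div (hg.sqrt hgu.ne') hs).congr_deriv ?_
  have hsq : √(g u) ^ 2 = g u := sq_sqrt hgu.le
  field_simp
  rw [hsq]
  ring

/-- If f > 0 satisfies f·f'' = (7/4)(f')² − f⁴ and κ₂ := √(9(f')²/(16f²) + 9f²/4),
then (f/κ₂)' − (1/4)(f'/κ₂) = 0. -/
theorem stmt_10 (a b : ℝ) (f : ℝ → ℝ)
    (hpos : ∀ u ∈ Set.Ioo a b, 0 < f u)
    (hdiff : ∀ u ∈ Set.Ioo a b, DifferentiableAt ℝ f u ∧ DifferentiableAt ℝ (deriv f) u)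
    (hode : ∀ u ∈ Set.Ioo a b,
      f u * deriv (deriv f) u = (7 / 4) * (deriv f u) ^ 2 - (f u) ^ 4) :
    ∀ u ∈ Set.Ioo a b,
      deriv (fun x => f x / Real.sqrt (9 * (deriv f x) ^ 2 / (16 * (f x) ^ 2) +
          9 * (f x) ^ 2 / 4)) u -
        (1 / 4) * (deriv f u / Real.sqrt (9 * (deriv f u) ^ 2 / (16 * (f u) ^ 2) +
          9 * (f u) ^ 2 / 4)) = 0 := by
  intro u hu
  have hfpos : 0 < f u := hpos u hu
  have hfu : f u ≠ 0 := hfpos.ne'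
  have hf : HasDerivAt f (deriv f u) u := (hdiff u hu).1.hasDerivAt
  have hκ : HasDerivAt (kappaSq f (deriv f)) _ u :=
    hasDerivAt_kappaSq hf (hdiff u hu).2.hasDerivAt hfu (hode u hu)
  have hκpos : 0 < kappaSq f (deriv f) u := by
    unfold kappaSq
    positivity
  exact sub_eq_zero.2 (hf.div_sqrt_of_logDeriv hκ hfu hκpos).deriv
end

section
/- Let f : (a,b) → ℝ be positive and twice differentiable satisfying f·f'' = (7/4)(f')² − f⁴, and define κ₂ := √(9(f')²/(16f²) + 9f²/4). Then (f'/(fκ₂))' + f²/κ₂ = 0. -/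
/-- If f > 0 satisfies f·f'' = (7/4)(f')² − f⁴ and κ₂ := √(9(f')²/(16f²) + 9f²/4),
then (f'/(fκ₂))' + f²/κ₂ = 0. -/
theorem stmt_11 (a b : ℝ) (f : ℝ → ℝ)
    (hpos : ∀ u ∈ Set.Ioo a b, 0 < f u)
    (hdiff : ∀ u ∈ Set.Ioo a b, DifferentiableAt ℝ f u ∧ DifferentiableAt ℝ (deriv f) u)
    (hode : ∀ u ∈ Set.Ioo a b,
      f u * deriv (deriv f) u = (7 / 4) * (deriv f u) ^ 2 - (f u) ^ 4) :
    ∀ u ∈ Set.Ioo a b,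
      deriv (fun x => deriv f x / (f x * Real.sqrt (9 * (deriv f x) ^ 2 / (16 * (f x) ^ 2) +
          9 * (f x) ^ 2 / 4))) u +
        (f u) ^ 2 / Real.sqrt (9 * (deriv f u) ^ 2 / (16 * (f u) ^ 2) +
          9 * (f u) ^ 2 / 4) = 0 := by
  intro u hu
  obtain ⟨hf, hf'⟩ := hdiff u hu
  have hFpos := hpos u hu
  have hF0 : f u ≠ 0 := ne_of_gt hFpos
  have h1 : HasDerivAt f (deriv f u) u := hf.hasDerivAt
  have h2 : HasDerivAt (deriv f) (deriv (deriv f) u) u := hf'.hasDerivAt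
  set F := f u with hFdef
  set P := deriv f u with hPdef
  set Q := deriv (deriv f) u with hQdef
  have hode' : F * Q = 7 / 4 * P ^ 2 - F ^ 4 := hode u hu
  -- inner function h
  have hP2 : HasDerivAt (fun x => 9 * (deriv f x) ^ 2) (9 * (2 * P * Q)) u := by
    have := (h2.pow 2).const_mul (9:ℝ)
    simpa [mul_comm, mul_assoc, mul_left_comm] using this
  have hF2 : HasDerivAt (fun x => 16 * (f x) ^ 2) (16 * (2 * F * P)) u := by
    have := (h1.pow 2).const_mul (16:ℝ)
    simpa [mul_comm, mul_assoc, mul_left_comm] using this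
  have hden0 : 16 * F ^ 2 ≠ 0 := by positivity
  have hG2 : HasDerivAt (fun x => 9 * (f x) ^ 2 / 4) (9 * (2 * F * P) / 4) u := by
    have := ((h1.pow 2).const_mul (9:ℝ)).div_const 4
    simpa [mul_comm, mul_assoc, mul_left_comm] using this
  set D : ℝ := (9 * (2 * P * Q) * (16 * F ^ 2) - 9 * P ^ 2 * (16 * (2 * F * P))) /
      (16 * F ^ 2) ^ 2 + 9 * (2 * F * P) / 4 with hDdef
  have hh : HasDerivAt (fun x => 9 * (deriv f x) ^ 2 / (16 * (f x) ^ 2) + 9 * (f x) ^ 2 / 4)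
      D u := (hP2.div hF2 hden0).add hG2
  have hhpos : 0 < 9 * P ^ 2 / (16 * F ^ 2) + 9 * F ^ 2 / 4 := by positivity
  set s : ℝ := Real.sqrt (9 * P ^ 2 / (16 * F ^ 2) + 9 * F ^ 2 / 4) with hsdef
  have hs : 0 < s := Real.sqrt_pos.mpr hhpos
  have hs2 : s ^ 2 = 9 * P ^ 2 / (16 * F ^ 2) + 9 * F ^ 2 / 4 := Real.sq_sqrt hhpos.le
  have hsqrt : HasDerivAt (fun x => Real.sqrt (9 * (deriv f x) ^ 2 / (16 * (f x) ^ 2) +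
      9 * (f x) ^ 2 / 4)) (D / (2 * s)) u := by
    have h := (Real.hasDerivAt_sqrt (ne_of_gt hhpos)).comp u hh
    have : (1 / (2 * s)) * D = D / (2 * s) := by ring
    rw [← this]
    exact h
  have hdenom : HasDerivAt (fun x => f x * Real.sqrt (9 * (deriv f x) ^ 2 / (16 * (f x) ^ 2) +
      9 * (f x) ^ 2 / 4)) (P * s + F * (D / (2 * s))) u := h1.mul hsqrt
  have hFs0 : F * s ≠ 0 := by positivity
  have hmain : HasDerivAt (fun x => deriv f x / (f x * Real.sqrt (9 * (deriv f x) ^ 2 /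
      (16 * (f x) ^ 2) + 9 * (f x) ^ 2 / 4)))
      ((Q * (F * s) - P * (P * s + F * (D / (2 * s)))) / (F * s) ^ 2) u :=
    h2.div hdenom hFs0
  have hs0 : s ≠ 0 := ne_of_gt hs
  have hQval : Q = (7 / 4 * P ^ 2 - F ^ 4) / F := by
    field_simp
    linarith [hode']
  have hPFD : P * F * D / 2 = (Q * F - P ^ 2 + F ^ 4) * s ^ 2 := by
    rw [hs2, hDdef, hQval]
    field_simp
    ring
  have hkey : Q * (F * s) - P * (P * s + F * (D / (2 * s))) = -(F ^ 4 * s) := by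
    field_simp
    linear_combination (-2 : ℝ) * hPFD
  rw [hmain.deriv, hkey]
  field_simp
  ring
end

section
/- Let f : (a,b) → ℝ be positive and twice differentiable satisfying f·f'' = (7/4)(f')² + (4/3)f² − f⁴ (the case c = 1), and define κ₂ := √(9(f')²/(16f²) + 9f²/4 + 1). Then 4κ₂'/κ₂ = 3f'/f. -/
/-- If f > 0 satisfies f·f'' = (7/4)(f')² + (4/3)f² − f⁴ (case c = 1), with
κ₂ := √(9(f')²/(16f²) + 9f²/4 + 1), then 4κ₂'/κ₂ = 3f'/f. -/
theorem stmt_12 (a b : ℝ) (f : ℝ → ℝ)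
    (hpos : ∀ u ∈ Set.Ioo a b, 0 < f u)
    (hdiff : ∀ u ∈ Set.Ioo a b, DifferentiableAt ℝ f u ∧ DifferentiableAt ℝ (deriv f) u)
    (hode : ∀ u ∈ Set.Ioo a b,
      f u * deriv (deriv f) u = (7 / 4) * (deriv f u) ^ 2 + (4 / 3) * (f u) ^ 2 - (f u) ^ 4) :
    ∀ u ∈ Set.Ioo a b,
      4 * deriv (fun x => Real.sqrt (9 * (deriv f x) ^ 2 / (16 * (f x) ^ 2) +
          9 * (f x) ^ 2 / 4 + 1)) u /
        Real.sqrt (9 * (deriv f u) ^ 2 / (16 * (f u) ^ 2) + 9 * (f u) ^ 2 / 4 + 1) =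
      3 * deriv f u / f u := by
  intro u hu
  obtain ⟨hfd, hfd'⟩ := hdiff u hu
  have hF : f u ≠ 0 := (hpos u hu).ne'
  have hf : HasDerivAt f (deriv f u) u := hfd.hasDerivAt
  have hf' : HasDerivAt (deriv f) (deriv (deriv f) u) u := hfd'.hasDerivAt
  have hne : 16 * (f u) ^ 2 ≠ 0 := by positivity
  have hgpos : 0 < 9 * (deriv f u) ^ 2 / (16 * (f u) ^ 2) + 9 * (f u) ^ 2 / 4 + 1 := by
    positivity
  have h1 : HasDerivAt (fun x => 9 * (deriv f x) ^ 2 / (16 * (f x) ^ 2) + 9 * (f x) ^ 2 / 4 + 1)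
      ((9 * (2 * deriv f u ^ (2 - 1) * deriv (deriv f) u) * (16 * f u ^ 2) -
          9 * deriv f u ^ 2 * (16 * (2 * f u ^ (2 - 1) * deriv f u))) / (16 * f u ^ 2) ^ 2 +
        9 * (2 * f u ^ (2 - 1) * deriv f u) / 4) u :=
    (((((hf'.pow 2).const_mul 9).div ((hf.pow 2).const_mul 16) hne).add
      (((hf.pow 2).const_mul 9).div_const 4))).add_const 1
  have h2 : HasDerivAt (fun x => Real.sqrt (9 * (deriv f x) ^ 2 / (16 * (f x) ^ 2) +
      9 * (f x) ^ 2 / 4 + 1))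
      (1 / (2 * Real.sqrt (9 * (deriv f u) ^ 2 / (16 * (f u) ^ 2) + 9 * (f u) ^ 2 / 4 + 1)) *
        ((9 * (2 * deriv f u ^ (2 - 1) * deriv (deriv f) u) * (16 * f u ^ 2) -
            9 * deriv f u ^ 2 * (16 * (2 * f u ^ (2 - 1) * deriv f u))) / (16 * f u ^ 2) ^ 2 +
          9 * (2 * f u ^ (2 - 1) * deriv f u) / 4)) u :=
    (Real.hasDerivAt_sqrt hgpos.ne').comp u h1
  rw [h2.deriv]
  have hF'' : deriv (deriv f) u =
      ((7 / 4) * (deriv f u) ^ 2 + (4 / 3) * (f u) ^ 2 - (f u) ^ 4) / f u := by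
    field_simp
    linarith [hode u hu]
  have hs : Real.sqrt (9 * (deriv f u) ^ 2 / (16 * (f u) ^ 2) + 9 * (f u) ^ 2 / 4 + 1) *
      Real.sqrt (9 * (deriv f u) ^ 2 / (16 * (f u) ^ 2) + 9 * (f u) ^ 2 / 4 + 1) =
      9 * (deriv f u) ^ 2 / (16 * (f u) ^ 2) + 9 * (f u) ^ 2 / 4 + 1 :=
    Real.mul_self_sqrt hgpos.le
  have hsne : Real.sqrt (9 * (deriv f u) ^ 2 / (16 * (f u) ^ 2) + 9 * (f u) ^ 2 / 4 + 1) ≠ 0 :=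
    (Real.sqrt_pos.mpr hgpos).ne'
  have haux : ∀ s D : ℝ, s ≠ 0 → 4 * (1 / (2 * s) * D) / s = 2 * D / (s * s) := by
    intro s D hsn; field_simp; ring
  rw [haux _ _ hsne, hs, hF'']
  rw [div_eq_div_iff hgpos.ne' hF]
  field_simp
  ring
end
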